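/- arXiv:2605.00213 — 4 statements merged into one kernel-verified Lean document; each statement's English description precedes it below -/
import Mathlib

section
/- Let α ∈ (0,1), let β ∈ 𝔻, and let φ_β be the disk automorphism φ_β(w) = (β − w)/(1 − β̄w). Then D_{φ_β} is not bounded on D_α; that is, there is no constant C > 0 such that every f ∈ D_α satisfies f′∘φ_β ∈ D_α with ‖f′∘φ_β‖_{D_α} ≤ C‖f‖_{D_α}. -/
open Complex MeasureTheory Metric Set ENNReal

noncomputable section

/-- The open unit disk in the complex plane. -/
def unitDisc : Set ℂ := {z : ℂ | ‖z‖ < 1}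

-- The order of vanishing (multiplicity) of `φ - w` at the point `z`.
open scoped Classical in
def vanishingOrder (φ : ℂ → ℂ) (w z : ℂ) : ℕ∞ :=
  if h : AnalyticAt ℂ (fun ζ => φ ζ - w) z then analyticOrderAt (fun ζ => φ ζ - w) z else 0

/-- The generalized Nevanlinna counting function `N_{φ,α}(w)`, counting preimages
with multiplicity, valued in `ℝ≥0∞`. -/
def nevanlinna (α : ℝ) (φ : ℂ → ℂ) (w : ℂ) : ℝ≥0∞ :=
  ∑' z : unitDisc, (vanishingOrder φ w z : ℝ≥0∞) * ENNReal.ofReal ((1 - ‖(z : ℂ)‖ ^ 2) ^ α)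

/-- `a` is the sequence of Taylor coefficients of `f` on the unit disc, and the corresponding
weighted Dirichlet norm is finite, i.e. `f ∈ D_α` with coefficient sequence `a`. -/
def InDirichlet (α : ℝ) (f : ℂ → ℂ) (a : ℕ → ℂ) : Prop :=
  (∀ z ∈ unitDisc, HasSum (fun n : ℕ => a n * z ^ n) (f z)) ∧
    Summable (fun n : ℕ => ((n : ℝ) + 1) ^ (1 - α) * ‖a n‖ ^ 2)

/-- The squared `D_α` norm of a coefficient sequence. -/
def dirichletNormSq (α : ℝ) (a : ℕ → ℂ) : ℝ :=
  ∑' n : ℕ, ((n : ℝ) + 1) ^ (1 - α) * ‖a n‖ ^ 2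

/-- The composition-differentiation operator `D_φ f = f' ∘ φ` is bounded on `D_α`. -/
def DphiBounded (α : ℝ) (φ : ℂ → ℂ) : Prop :=
  ∃ C > 0, ∀ f : ℂ → ℂ, ∀ a : ℕ → ℂ, InDirichlet α f a →
    ∃ b : ℕ → ℂ, InDirichlet α (fun z => deriv f (φ z)) b ∧
      Real.sqrt (dirichletNormSq α b) ≤ C * Real.sqrt (dirichletNormSq α a)

/-- The weighted counting measure `μ_α = ∑ (n+1)^{1-α} δ_n` on `ℕ`. -/
def dirMeasure (α : ℝ) : Measure ℕ :=
  Measure.sum fun n : ℕ => (((n : ℝ≥0∞) + 1) ^ (1 - α)) • Measure.dirac n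

/-- A bounded operator `T` on `H_α = L²(ℕ, μ_α)` represents `D_φ` if for every `a ∈ H_α`,
with `f(z) = ∑ aₙ zⁿ`, the sequence `T a` is the Taylor coefficient sequence of `f' ∘ φ`,
i.e. `∑ (T a)ₙ zⁿ` converges to `(f' ∘ φ)(z)` on the disc. -/
def Represents (α : ℝ) (φ : ℂ → ℂ)
    (T : Lp ℂ 2 (dirMeasure α) →L[ℂ] Lp ℂ 2 (dirMeasure α)) : Prop :=
  ∀ a : Lp ℂ 2 (dirMeasure α), ∀ z ∈ unitDisc,
    HasSum (fun n => (T a : ℕ → ℂ) n * z ^ n)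
      (deriv (fun ζ => ∑' n : ℕ, (a : ℕ → ℂ) n * ζ ^ n) (φ z))

/-- The essential norm of a bounded operator: distance to the compact operators. -/
def essNorm {H : Type*} [NormedAddCommGroup H] [NormedSpace ℂ H]
    (T : H →L[ℂ] H) : ℝ :=
  sInf {c : ℝ | ∃ K : H →L[ℂ] H, IsCompactOperator ⇑K ∧ c = ‖T - K‖}


/-! If `D_{φ_β}` maps `f ∈ D_α` into `D_α`, then `f' ∘ φ_β` has square-summable, hence bounded,
Taylor coefficients, so `|f'(φ_β w)| ≲ 1 / (1 - |w|)`. Since `φ_β` is an involution which changes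
`1 - |z|` by at most a constant factor, `|f'(z)| ≲ 1 / (1 - |z|)`, and integrating along `[0, 1)`
gives `Re f(x) ≲ log (1 / (1 - x))`. But `f(z) = ∑ (n + 1) ^ (α / 4 - 1) zⁿ` lies in `D_α` and has
positive coefficients, so `f(1 - 1 / (2M)) ≳ M ^ (α / 4)`, which outgrows the logarithm. -/
open Filter

section DiskAutomorphism

def diskAutomorphism (β z : ℂ) : ℂ := (β - z) / (1 - starRingEnd ℂ β * z)

variable {β z : ℂ}

theorem norm_one_sub_conj_mul_sq_sub_norm_sub_sq (β z : ℂ) :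
    ‖1 - starRingEnd ℂ β * z‖ ^ 2 - ‖β - z‖ ^ 2 = (1 - ‖β‖ ^ 2) * (1 - ‖z‖ ^ 2) := by
  simp only [← Complex.normSq_eq_norm_sq, Complex.normSq_apply, Complex.sub_re, Complex.sub_im,
    Complex.mul_re, Complex.mul_im, Complex.one_re, Complex.one_im, Complex.conj_re,
    Complex.conj_im]
  ring

theorem one_sub_conj_mul_ne_zero (hβ : β ∈ unitDisc) (hz : z ∈ unitDisc) :
    1 - starRingEnd ℂ β * z ≠ 0 := by
  have : ‖starRingEnd ℂ β * z‖ < 1 := by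
    rw [norm_mul, Complex.norm_conj]
    exact mul_lt_one_of_nonneg_of_lt_one_left (norm_nonneg β) hβ hz.le
  intro h
  rw [← sub_eq_zero.1 h, norm_one] at this
  exact this.false

theorem diskAutomorphism_mem_unitDisc (hβ : β ∈ unitDisc) (hz : z ∈ unitDisc) :
    diskAutomorphism β z ∈ unitDisc := by
  have hd := norm_pos_iff.2 (one_sub_conj_mul_ne_zero hβ hz)
  have key := norm_one_sub_conj_mul_sq_sub_norm_sub_sq β z
  have hβ2 : 0 < 1 - ‖β‖ ^ 2 := by nlinarith [norm_nonneg β, show ‖β‖ < 1 from hβ]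
  have hz2 : 0 < 1 - ‖z‖ ^ 2 := by nlinarith [norm_nonneg z, show ‖z‖ < 1 from hz]
  show ‖diskAutomorphism β z‖ < 1
  rw [diskAutomorphism, norm_div, div_lt_one hd]
  exact lt_of_pow_lt_pow_left₀ 2 hd.le (by nlinarith [mul_pos hβ2 hz2])

theorem diskAutomorphism_diskAutomorphism (hβ : β ∈ unitDisc) (hz : z ∈ unitDisc) :
    diskAutomorphism β (diskAutomorphism β z) = z := by
  have hD := one_sub_conj_mul_ne_zero hβ hz
  have hβ' := one_sub_conj_mul_ne_zero hβ hβ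
  have hE : 1 - starRingEnd ℂ β * z - starRingEnd ℂ β * (β - z) ≠ 0 := by
    convert hβ' using 1; ring
  unfold diskAutomorphism
  rw [mul_div_assoc', one_sub_div hD, sub_div' hD, div_div_div_cancel_right₀ hD, div_eq_iff hE]
  ring

theorem one_sub_norm_diskAutomorphism_ge (hβ : β ∈ unitDisc) (hz : z ∈ unitDisc) :
    (1 - ‖β‖ ^ 2) * (1 - ‖z‖) / 8 ≤ 1 - ‖diskAutomorphism β z‖ := by
  have hβ1 : ‖β‖ < 1 := hβ
  have hz1 : ‖z‖ < 1 := hz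
  have hu1 : ‖diskAutomorphism β z‖ < 1 := diskAutomorphism_mem_unitDisc hβ hz
  have hD : ‖diskAutomorphism β z‖ * ‖1 - starRingEnd ℂ β * z‖ = ‖β - z‖ := by
    rw [diskAutomorphism, norm_div,
      div_mul_cancel₀ _ (norm_ne_zero_iff.2 (one_sub_conj_mul_ne_zero hβ hz))]
  set u := ‖diskAutomorphism β z‖
  set D := ‖1 - starRingEnd ℂ β * z‖
  have hD2 : D ^ 2 ≤ 4 := by
    have : D ≤ 2 := calc
      D ≤ ‖(1 : ℂ)‖ + ‖starRingEnd ℂ β * z‖ := norm_sub_le _ _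
      _ ≤ 2 := by
        rw [norm_one, norm_mul, Complex.norm_conj]
        nlinarith [norm_nonneg β, norm_nonneg z]
    nlinarith [norm_nonneg (1 - starRingEnd ℂ β * z)]
  have hβ2 : 0 ≤ 1 - ‖β‖ ^ 2 := by nlinarith [norm_nonneg β]
  have hu2 : 0 ≤ 1 - u ^ 2 := by nlinarith [norm_nonneg (diskAutomorphism β z)]
  calc (1 - ‖β‖ ^ 2) * (1 - ‖z‖) / 8
      ≤ (1 - ‖β‖ ^ 2) * (1 - ‖z‖ ^ 2) / 8 := by gcongr; nlinarith [norm_nonneg z]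
    _ = (1 - u ^ 2) * D ^ 2 / 8 := by
      rw [← norm_one_sub_conj_mul_sq_sub_norm_sub_sq, ← hD]; ring
    _ ≤ (1 - u ^ 2) / 2 := by nlinarith
    _ ≤ 1 - u := by nlinarith [norm_nonneg (diskAutomorphism β z)]

end DiskAutomorphism

section CoefficientGrowth

variable {α : ℝ} {b : ℕ → ℂ}

theorem norm_le_sqrt_dirichletNormSq (hα : α ≤ 1)
    (hb : Summable fun n : ℕ => ((n : ℝ) + 1) ^ (1 - α) * ‖b n‖ ^ 2) (n : ℕ) :
    ‖b n‖ ≤ √(dirichletNormSq α b) := by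
  apply Real.le_sqrt_of_sq_le
  have hw : 1 ≤ ((n : ℝ) + 1) ^ (1 - α) :=
    Real.one_le_rpow (by linarith [n.cast_nonneg (α := ℝ)]) (by linarith)
  calc ‖b n‖ ^ 2 ≤ ((n : ℝ) + 1) ^ (1 - α) * ‖b n‖ ^ 2 := le_mul_of_one_le_left (by positivity) hw
    _ ≤ dirichletNormSq α b := hb.le_tsum n fun _ _ => by positivity

theorem norm_le_div_one_sub_norm_of_hasSum {K : ℝ} {w g : ℂ} (hK : ∀ n, ‖b n‖ ≤ K)
    (hw : ‖w‖ < 1) (hg : HasSum (fun n => b n * w ^ n) g) : ‖g‖ ≤ K / (1 - ‖w‖) := by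
  refine hg.norm_le_of_bounded ((hasSum_geometric_of_lt_one (norm_nonneg w) hw).mul_left K)
    fun n => ?_
  rw [norm_mul, norm_pow]
  exact mul_le_mul_of_nonneg_right (hK n) (by positivity)

theorem InDirichlet.norm_le {g : ℂ → ℂ} {w : ℂ} (hα : α ≤ 1) (hg : InDirichlet α g b)
    (hw : w ∈ unitDisc) : ‖g w‖ ≤ √(dirichletNormSq α b) / (1 - ‖w‖) :=
  norm_le_div_one_sub_norm_of_hasSum (norm_le_sqrt_dirichletNormSq hα hg.2) hw (hg.1 w hw)

end CoefficientGrowth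

theorem norm_le_of_inDirichlet_comp_diskAutomorphism {α : ℝ} {β z : ℂ} {g : ℂ → ℂ}
    {b : ℕ → ℂ} (hα : α ≤ 1) (hβ : β ∈ unitDisc)
    (hg : InDirichlet α (fun w => g (diskAutomorphism β w)) b) (hz : z ∈ unitDisc) :
    ‖g z‖ ≤ 8 * √(dirichletNormSq α b) / (1 - ‖β‖ ^ 2) / (1 - ‖z‖) := by
  have hw := diskAutomorphism_mem_unitDisc hβ hz
  have hβ2 : 0 < 1 - ‖β‖ ^ 2 := by nlinarith [norm_nonneg β, show ‖β‖ < 1 from hβ]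
  have hz1 : 0 < 1 - ‖z‖ := sub_pos.2 hz
  have hw1 : 0 < 1 - ‖diskAutomorphism β z‖ := sub_pos.2 hw
  calc ‖g z‖ = ‖g (diskAutomorphism β (diskAutomorphism β z))‖ := by
        rw [diskAutomorphism_diskAutomorphism hβ hz]
    _ ≤ √(dirichletNormSq α b) / (1 - ‖diskAutomorphism β z‖) := hg.norm_le hα hw
    _ ≤ √(dirichletNormSq α b) / ((1 - ‖β‖ ^ 2) * (1 - ‖z‖) / 8) :=
        div_le_div_of_nonneg_left (by positivity) (by positivity)
          (one_sub_norm_diskAutomorphism_ge hβ hz)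
    _ = 8 * √(dirichletNormSq α b) / (1 - ‖β‖ ^ 2) / (1 - ‖z‖) := by
        field_simp

theorem ofReal_mem_unitDisc {x : ℝ} (hx : |x| < 1) : (x : ℂ) ∈ unitDisc := by
  show ‖(x : ℂ)‖ < 1
  rwa [Complex.norm_real, Real.norm_eq_abs]

theorem re_le_re_zero_sub_mul_log_one_sub {f : ℂ → ℂ} {A x : ℝ}
    (hf : ∀ z ∈ unitDisc, DifferentiableAt ℂ f z)
    (hA : ∀ z ∈ unitDisc, ‖deriv f z‖ ≤ A / (1 - ‖z‖)) (hx0 : 0 ≤ x) (hx1 : x < 1) :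
    (f x).re ≤ (f 0).re - A * Real.log (1 - x) := by
  set G : ℝ → ℝ := fun t => (f t).re + A * Real.log (1 - t)
  have ht : ∀ t ∈ Icc 0 x, (t : ℂ) ∈ unitDisc ∧ ‖(t : ℂ)‖ = t := fun t ht =>
    ⟨ofReal_mem_unitDisc (by rw [abs_lt]; constructor <;> linarith [ht.1, ht.2]),
      by rw [Complex.norm_real, Real.norm_of_nonneg ht.1]⟩
  have hG : ∀ t ∈ Icc 0 x, HasDerivAt G ((deriv f t).re + A * (-1 / (1 - t))) t := by
    intro t htx
    refine (hf t (ht t htx).1).hasDerivAt.real_of_complex.add (HasDerivAt.const_mul A ?_)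
    exact ((hasDerivAt_id t).const_sub 1).log (sub_ne_zero.2 (htx.2.trans_lt hx1).ne')
  -- `Re f' ≤ A / (1 - t)`, the derivative of `-A log (1 - t)`
  have hanti : AntitoneOn G (Icc 0 x) := by
    refine antitoneOn_of_hasDerivWithinAt_nonpos (convex_Icc 0 x)
      (fun t htx => (hG t htx).continuousAt.continuousWithinAt)
      (fun t htx => (hG t (interior_subset htx)).hasDerivWithinAt) fun t htx => ?_
    have htx := interior_subset (s := Icc 0 x) htx
    have := (Complex.re_le_norm _).trans (hA t (ht t htx).1)
    rw [(ht t htx).2] at this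
    rw [mul_div_assoc', mul_neg_one, neg_div]
    linarith
  have := hanti (left_mem_Icc.2 hx0) (right_mem_Icc.2 hx0) hx0
  simp only [G, Complex.ofReal_zero, sub_zero, Real.log_one, mul_zero, add_zero] at this
  linarith

section PowerSeries

open FormalMultilinearSeries

variable {a : ℕ → ℂ} {K : ℝ} {z : ℂ}

theorem one_le_radius_ofScalars_of_norm_le (hK : ∀ n, ‖a n‖ ≤ K) :
    1 ≤ (ofScalars ℂ a).radius := by
  refine ENNReal.le_of_forall_nnreal_lt fun r hr => (ofScalars ℂ a).le_radius_of_bound K fun n => ?_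
  have hr1 : (r : ℝ) ≤ 1 := by exact_mod_cast (ENNReal.coe_lt_one_iff.1 hr).le
  rw [ofScalars_norm]
  exact (mul_le_of_le_one_right (norm_nonneg _) (pow_le_one₀ r.coe_nonneg hr1)).trans (hK n)

theorem mem_eball_radius_ofScalars_of_norm_le (hK : ∀ n, ‖a n‖ ≤ K) (hz : z ∈ unitDisc) :
    z ∈ eball (0 : ℂ) (ofScalars ℂ a).radius := by
  refine lt_of_lt_of_le ?_ (one_le_radius_ofScalars_of_norm_le hK)
  rw [edist_zero_right, enorm_eq_nnnorm, ENNReal.coe_lt_one_iff, ← NNReal.coe_lt_one]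
  exact hz

theorem hasSum_ofScalarsSum_of_norm_le (hK : ∀ n, ‖a n‖ ≤ K) (hz : z ∈ unitDisc) :
    HasSum (fun n => a n * z ^ n) (ofScalarsSum a z) := by
  simpa only [ofScalars_apply_eq, smul_eq_mul] using!
    (ofScalars ℂ a).hasSum (mem_eball_radius_ofScalars_of_norm_le hK hz)

theorem differentiableAt_ofScalarsSum_of_norm_le (hK : ∀ n, ‖a n‖ ≤ K) (hz : z ∈ unitDisc) :
    DifferentiableAt ℂ (ofScalarsSum a) z :=
  ((ofScalars ℂ a).hasFPowerSeriesOnBall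
    (zero_lt_one.trans_le (one_le_radius_ofScalars_of_norm_le hK))).differentiableOn.differentiableAt
    (isOpen_eball.mem_nhds (mem_eball_radius_ofScalars_of_norm_le hK hz))

end PowerSeries

section TestFunction

def rpowNegCoeff (s : ℝ) (n : ℕ) : ℂ := (((n : ℝ) + 1) ^ (-s) : ℝ)

variable {s : ℝ}

theorem norm_rpowNegCoeff (s : ℝ) (n : ℕ) : ‖rpowNegCoeff s n‖ = ((n : ℝ) + 1) ^ (-s) := by
  rw [rpowNegCoeff, Complex.norm_real, Real.norm_of_nonneg (by positivity)]

theorem norm_rpowNegCoeff_le_one (hs : 0 ≤ s) (n : ℕ) : ‖rpowNegCoeff s n‖ ≤ 1 := by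
  rw [norm_rpowNegCoeff]
  exact Real.rpow_le_one_of_one_le_of_nonpos (by linarith [n.cast_nonneg (α := ℝ)]) (by linarith)

theorem summable_rpow_mul_norm_rpowNegCoeff_sq {α : ℝ} (h : 2 - α < 2 * s) :
    Summable fun n : ℕ => ((n : ℝ) + 1) ^ (1 - α) * ‖rpowNegCoeff s n‖ ^ 2 := by
  have hp : Summable fun n : ℕ => ((n + 1 : ℕ) : ℝ) ^ (1 - α - 2 * s) :=
    (summable_nat_add_iff 1).2 (Real.summable_nat_rpow.2 (by linarith))
  refine hp.congr fun n => ?_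
  have hn : (0 : ℝ) < n + 1 := by positivity
  rw [norm_rpowNegCoeff, ← Real.rpow_natCast, ← Real.rpow_mul hn.le, ← Real.rpow_add hn]
  push_cast
  ring_nf

theorem natCast_rpow_mul_pow_le_of_hasSum {x S : ℝ} (hs : 0 ≤ s) (hx0 : 0 ≤ x) (hx1 : x ≤ 1)
    {M : ℕ} (hM : 0 < M) (hS : HasSum (fun n : ℕ => ((n : ℝ) + 1) ^ (-s) * x ^ n) S) :
    (M : ℝ) ^ (1 - s) * x ^ M ≤ S := by
  have hM' : (0 : ℝ) < M := by exact_mod_cast hM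
  have hterm : ∀ n ∈ Finset.range M, (M : ℝ) ^ (-s) * x ^ M ≤ ((n : ℝ) + 1) ^ (-s) * x ^ n := by
    intro n hn
    have hn : n < M := Finset.mem_range.1 hn
    have hnM : (n : ℝ) + 1 ≤ M := by exact_mod_cast hn
    exact mul_le_mul (Real.rpow_le_rpow_of_nonpos (by positivity) hnM (by linarith))
      (pow_le_pow_of_le_one hx0 hx1 hn.le) (by positivity) (by positivity)
  calc (M : ℝ) ^ (1 - s) * x ^ M = (Finset.range M).card • ((M : ℝ) ^ (-s) * x ^ M) := by
        rw [Finset.card_range, nsmul_eq_mul, sub_eq_add_neg, Real.rpow_add hM', Real.rpow_one]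
        ring
    _ ≤ ∑ n ∈ Finset.range M, ((n : ℝ) + 1) ^ (-s) * x ^ n := Finset.card_nsmul_le_sum _ _ _ hterm
    _ ≤ S := sum_le_hasSum _ (fun n _ => by positivity) hS

theorem half_le_one_sub_inv_two_mul_pow (M : ℕ) : 1 / 2 ≤ (1 - 1 / (2 * M : ℝ)) ^ M := by
  rcases M.eq_zero_or_pos with rfl | hM
  · norm_num
  have hM' : (0 : ℝ) < M := by exact_mod_cast hM
  calc (1 : ℝ) / 2 = 1 + M * (-(1 / (2 * M))) := by field_simp; ring
    _ ≤ (1 + -(1 / (2 * M))) ^ M := one_add_mul_le_pow (by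
        have : 1 / (2 * (M : ℝ)) ≤ 1 := by
          rw [div_le_one (by positivity)]; exact_mod_cast (by omega : 1 ≤ 2 * M)
        linarith) M
    _ = (1 - 1 / (2 * M : ℝ)) ^ M := by rw [← sub_eq_add_neg]

theorem hasSum_re_ofScalarsSum_rpowNegCoeff (hs : 0 ≤ s) {x : ℝ} (hx : |x| < 1) :
    HasSum (fun n : ℕ => ((n : ℝ) + 1) ^ (-s) * x ^ n)
      (FormalMultilinearSeries.ofScalarsSum (rpowNegCoeff s) (x : ℂ)).re := by
  convert Complex.hasSum_re
    (hasSum_ofScalarsSum_of_norm_le (norm_rpowNegCoeff_le_one hs) (ofReal_mem_unitDisc hx)) using 2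
  rw [rpowNegCoeff, ← Complex.ofReal_pow, ← Complex.ofReal_mul, Complex.ofReal_re]

theorem one_sub_one_div_two_mul_mem_Ico {M : ℕ} (hM : 0 < M) :
    1 - 1 / (2 * M : ℝ) ∈ Ico 0 1 := by
  have hM' : (1 : ℝ) ≤ M := by exact_mod_cast hM
  refine ⟨?_, sub_lt_self 1 (by positivity)⟩
  rw [sub_nonneg, div_le_one (by positivity)]
  linarith

theorem rpow_div_two_le_re_ofScalarsSum_rpowNegCoeff (hs : 0 ≤ s) {M : ℕ} (hM : 0 < M) :
    (M : ℝ) ^ (1 - s) / 2 ≤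
      (FormalMultilinearSeries.ofScalarsSum (rpowNegCoeff s) ((1 - 1 / (2 * M) : ℝ) : ℂ)).re := by
  obtain ⟨hx0, hx1⟩ := one_sub_one_div_two_mul_mem_Ico hM
  calc (M : ℝ) ^ (1 - s) / 2 ≤ (M : ℝ) ^ (1 - s) * (1 - 1 / (2 * M : ℝ)) ^ M := by
        rw [div_eq_mul_one_div]
        exact mul_le_mul_of_nonneg_left (half_le_one_sub_inv_two_mul_pow M) (by positivity)
    _ ≤ _ := natCast_rpow_mul_pow_le_of_hasSum hs hx0 hx1.le hM
        (hasSum_re_ofScalarsSum_rpowNegCoeff hs (abs_lt.2 ⟨by linarith, hx1⟩))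

end TestFunction

theorem eventually_add_mul_log_lt_mul_rpow {r c : ℝ} (hr : 0 < r) (hc : 0 < c) (A B : ℝ) :
    ∀ᶠ x : ℝ in atTop, B + A * Real.log x < c * x ^ r := by
  have h : (fun x => B + A * Real.log x) =o[atTop] fun x => x ^ r :=
    (Asymptotics.isLittleO_const_left.2
      (Or.inr (tendsto_norm_atTop_atTop.comp (tendsto_rpow_atTop hr)))).add
      ((isLittleO_log_rpow_atTop hr).const_mul_left A)
  filter_upwards [h.def (half_pos hc), eventually_gt_atTop 0] with x hx hx0
  have hxr := Real.rpow_pos_of_pos hx0 r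
  rw [Real.norm_of_nonneg hxr.le] at hx
  linarith [Real.le_norm_self (B + A * Real.log x), half_lt_self (mul_pos hc hxr)]

/-- The composition-differentiation operator induced by the disk
automorphism `φ_β(w) = (β - w)/(1 - β̄ w)` is not bounded on `D_α`. -/
theorem Dphi_automorphism_not_bounded
    (α : ℝ) (hα : α ∈ Set.Ioo (0 : ℝ) 1) (β : ℂ) (hβ : β ∈ unitDisc) :
    ¬ DphiBounded α (fun w => (β - w) / (1 - (starRingEnd ℂ) β * w)) := by
  rintro ⟨_, -, hbdd⟩
  have hs : 0 ≤ 1 - α / 4 := by linarith [hα.2]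
  have ha := norm_rpowNegCoeff_le_one hs
  set f := FormalMultilinearSeries.ofScalarsSum (E := ℂ) (rpowNegCoeff (1 - α / 4))
  obtain ⟨b, hb, -⟩ := hbdd f _ ⟨fun z hz => hasSum_ofScalarsSum_of_norm_le ha hz,
    summable_rpow_mul_norm_rpowNegCoeff_sq (by linarith [hα.1])⟩
  set A := 8 * √(dirichletNormSq α b) / (1 - ‖β‖ ^ 2)
  obtain ⟨M, hlt, hM⟩ := ((tendsto_natCast_atTop_atTop.eventually
    (eventually_add_mul_log_lt_mul_rpow (by linarith [hα.1] : 0 < α / 4) one_half_pos A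
      ((f 0).re + A * Real.log 2))).and (eventually_gt_atTop 0)).exists
  obtain ⟨hx0, hx1⟩ := one_sub_one_div_two_mul_mem_Ico hM
  have hupper := re_le_re_zero_sub_mul_log_one_sub (A := A)
    (fun z hz => differentiableAt_ofScalarsSum_of_norm_le ha hz)
      (fun z hz => norm_le_of_inDirichlet_comp_diskAutomorphism hα.2.le hβ hb hz) hx0 hx1
  have hlower := rpow_div_two_le_re_ofScalarsSum_rpowNegCoeff hs hM
  have hlog : Real.log (1 / (2 * M)) = -(Real.log 2 + Real.log M) := by
    rw [one_div, Real.log_inv, Real.log_mul two_ne_zero (Nat.cast_ne_zero.2 hM.ne')]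
  rw [_root_.sub_sub_cancel, hlog] at hupper
  rw [_root_.sub_sub_cancel] at hlower
  linarith
end
end

section
/- Let α ∈ (0,1) and let r ∈ ℂ with 0 < |r| < 1. The linear map T_r on H_α given by (T_r a)_n = (n+1) r^n a_{n+1} (the operator representing D_φ for φ(z) = rz) is bounded, and its operator norm equals (⌊x_0⌋+1)^{(3−α)/2}(⌊x_0⌋+2)^{(α−1)/2}|r|^{⌊x_0⌋} if f(⌊x_0⌋) < f(⌊x_0⌋+1), and ⌊x_0⌋^{(3−α)/2}(⌊x_0⌋+1)^{(α−1)/2}|r|^{⌊x_0⌋−1} otherwise, where f(x) = x^{(3−α)/2}(x+1)^{(α−1)/2}|r|^{x−1} and x_0 = [−(1+log|r|) − √((1+log|r|)² − 2(3−α)log|r|)]/(2 log|r|). -/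
/-!
`D_φ` acts on coefficients as the weighted backward shift `(T a)ₙ = cₙ aₙ₊₁` with
`cₙ = (n + 1) rⁿ`. In the weighted `ℓ²` space with weights `wₙ = μ_α {n}`, comparing the
series for `‖T a‖²` and `‖a‖²` term by term bounds `‖T‖` by `sₙ = |cₙ| (wₙ / wₙ₊₁)^{1/2}`, and a
basis vector attains the largest `sₙ`; here `sₙ = f (n + 1)`. The logarithmic derivative of `f`
is `q(x) / (x (x + 1))` with `q(x) = log|r| x² + (1 + log|r|) x + (3 - α)/2`, a concave quadratic
with `q(0) > 0` whose positive root is `x₀`. So `f` increases on `[0, x₀]` and decreases on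
`[x₀, ∞)`, and over the integers it is largest at `⌊x₀⌋` or `⌊x₀⌋ + 1`.
-/

open Complex MeasureTheory Metric Set ENNReal

noncomputable section

section CountableLp

variable {ι : Type*} [Countable ι] [MeasurableSpace ι] {μ : Measure ι}

lemma eLpNorm_two_sq_eq_tsum [MeasurableSingletonClass ι] {E : Type*} [NormedAddCommGroup E]
    (f : ι → E) :
    eLpNorm f 2 μ ^ 2 = ∑' i, ‖f i‖ₑ ^ 2 * μ {i} := by
  have h := eLpNorm_nnreal_pow_eq_lintegral (f := f) (μ := μ) (p := 2) two_ne_zero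
  simp only [NNReal.coe_ofNat, ENNReal.rpow_two, ENNReal.coe_ofNat] at h
  rw [h, lintegral_countable']

lemma eLpNorm_single_sq [MeasurableSingletonClass ι] [DecidableEq ι] (i : ι) (z : ℂ) :
    eLpNorm (Pi.single i z) 2 μ ^ 2 = ‖z‖ₑ ^ 2 * μ {i} := by
  rw [eLpNorm_two_sq_eq_tsum, tsum_eq_single i fun j hj => by simp [hj]]
  simp

lemma memLp_single [MeasurableSingletonClass ι] [DecidableEq ι] (hμ_top : ∀ i, μ {i} ≠ ∞)
    (i : ι) (z : ℂ) : MemLp (Pi.single i z) 2 μ := by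
  refine ⟨.of_discrete, lt_top_iff_ne_top.2 fun h => ?_⟩
  have hsq := eLpNorm_single_sq (μ := μ) i z
  rw [h, ENNReal.top_pow two_ne_zero] at hsq
  exact mul_ne_top (pow_ne_top enorm_ne_top) (hμ_top i) hsq.symm

variable (hμ : ∀ i, μ {i} ≠ 0)
include hμ

lemma eLpNorm_single_ne_zero [MeasurableSingletonClass ι] [DecidableEq ι] (i : ι) {z : ℂ}
    (hz : z ≠ 0) : eLpNorm (Pi.single i z) 2 μ ≠ 0 := by
  intro h
  have hsq := eLpNorm_single_sq (μ := μ) i z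
  simp [h, hμ, hz] at hsq

lemma ae_iff_forall_of_singleton_ne_zero {p : ι → Prop} : (∀ᵐ i ∂μ, p i) ↔ ∀ i, p i := by
  simp [ae_iff_of_countable, hμ]

lemma MeasureTheory.Lp.ext_of_singleton_ne_zero {f g : Lp ℂ 2 μ} (h : ∀ i, f i = g i) : f = g :=
  Lp.ext ((ae_iff_forall_of_singleton_ne_zero hμ).2 h)

lemma MeasureTheory.Lp.coeFn_add_apply (f g : Lp ℂ 2 μ) (i : ι) :
    (f + g : Lp ℂ 2 μ) i = f i + g i :=
  (ae_iff_forall_of_singleton_ne_zero hμ).1 (Lp.coeFn_add f g) i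

lemma MeasureTheory.Lp.coeFn_smul_apply (z : ℂ) (f : Lp ℂ 2 μ) (i : ι) :
    (z • f : Lp ℂ 2 μ) i = z * f i :=
  (ae_iff_forall_of_singleton_ne_zero hμ).1 (Lp.coeFn_smul z f) i

lemma MeasureTheory.MemLp.coeFn_toLp_apply {f : ι → ℂ} (hf : MemLp f 2 μ) (i : ι) :
    hf.toLp f i = f i :=
  (ae_iff_forall_of_singleton_ne_zero hμ).1 hf.coeFn_toLp i

end CountableLp

def weightedShift (c f : ℕ → ℂ) : ℕ → ℂ := fun n => c n * f (n + 1)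

section WeightedShift

variable {μ : Measure ℕ} {c : ℕ → ℂ} {s : ℕ → ℝ}

variable (c) in
def weightedShiftLp (hμ : ∀ n, μ {n} ≠ 0)
    (hmem : ∀ a : Lp ℂ 2 μ, MemLp (weightedShift c a) 2 μ) : Lp ℂ 2 μ →ₗ[ℂ] Lp ℂ 2 μ where
  toFun a := (hmem a).toLp
  map_add' a b := by
    refine Lp.ext_of_singleton_ne_zero hμ fun n => ?_
    simp only [Lp.coeFn_add_apply hμ, MemLp.coeFn_toLp_apply hμ, weightedShift, mul_add]
  map_smul' z a := by
    refine Lp.ext_of_singleton_ne_zero hμ fun n => ?_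
    simp only [Lp.coeFn_smul_apply hμ, MemLp.coeFn_toLp_apply hμ, weightedShift, RingHom.id_apply]
    ring

lemma weightedShiftLp_apply (hμ : ∀ n, μ {n} ≠ 0)
    (hmem : ∀ a : Lp ℂ 2 μ, MemLp (weightedShift c a) 2 μ) (a : Lp ℂ 2 μ) :
    weightedShiftLp c hμ hmem a = (hmem a).toLp :=
  rfl

variable (hc : ∀ n, ‖c n‖ₑ ^ 2 * μ {n} = ENNReal.ofReal (s n) ^ 2 * μ {n + 1})
include hc

lemma eLpNorm_weightedShift_sq (f : ℕ → ℂ) :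
    eLpNorm (weightedShift c f) 2 μ ^ 2 =
      ∑' n, ENNReal.ofReal (s n) ^ 2 * (‖f (n + 1)‖ₑ ^ 2 * μ {n + 1}) := by
  rw [eLpNorm_two_sq_eq_tsum]
  refine tsum_congr fun n => ?_
  rw [weightedShift, enorm_mul, mul_pow, mul_right_comm, hc]
  ring

lemma eLpNorm_weightedShift_le {S : ℝ} (hs : ∀ n, s n ≤ S) (f : ℕ → ℂ) :
    eLpNorm (weightedShift c f) 2 μ ≤ ENNReal.ofReal S * eLpNorm f 2 μ := by
  rw [← ENNReal.pow_le_pow_left_iff two_ne_zero, mul_pow, eLpNorm_weightedShift_sq hc,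
    eLpNorm_two_sq_eq_tsum, ← ENNReal.tsum_mul_left]
  calc ∑' n, ENNReal.ofReal (s n) ^ 2 * (‖f (n + 1)‖ₑ ^ 2 * μ {n + 1})
      ≤ ∑' n, ENNReal.ofReal S ^ 2 * (‖f (n + 1)‖ₑ ^ 2 * μ {n + 1}) := by
        gcongr with n; exact hs n
    _ ≤ ∑' n, ENNReal.ofReal S ^ 2 * (‖f n‖ₑ ^ 2 * μ {n}) :=
        ENNReal.tsum_comp_le_tsum_of_injective (add_left_injective 1) _

lemma eLpNorm_weightedShift_single (m : ℕ) :
    eLpNorm (weightedShift c (Pi.single (m + 1) 1)) 2 μ =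
      ENNReal.ofReal (s m) * eLpNorm (Pi.single (m + 1) (1 : ℂ)) 2 μ := by
  refine (ENNReal.pow_right_strictMono two_ne_zero).injective ?_
  rw [mul_pow, eLpNorm_weightedShift_sq hc, eLpNorm_single_sq,
    tsum_eq_single m fun n hn => by simp [hn]]
  simp

theorem exists_weightedShift_norm_eq (hμ : ∀ n, μ {n} ≠ 0) (hμ_top : ∀ n, μ {n} ≠ ∞)
    {S : ℝ} (hS : IsGreatest (range s) S) (hS₀ : 0 ≤ S) :
    ∃ T : Lp ℂ 2 μ →L[ℂ] Lp ℂ 2 μ, (∀ a n, T a n = c n * a (n + 1)) ∧ ‖T‖ = S := by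
  have hle := eLpNorm_weightedShift_le hc fun n => hS.2 (mem_range_self n)
  have hmem (a : Lp ℂ 2 μ) : MemLp (weightedShift c a) 2 μ :=
    ⟨.of_discrete, (hle a).trans_lt (mul_lt_top ofReal_lt_top (Lp.eLpNorm_lt_top a))⟩
  have hbound (a : Lp ℂ 2 μ) : ‖weightedShiftLp c hμ hmem a‖ ≤ S * ‖a‖ := by
    rw [weightedShiftLp_apply, Lp.norm_toLp, Lp.norm_def, ← ENNReal.toReal_ofReal hS₀,
      ← ENNReal.toReal_mul]
    exact ENNReal.toReal_mono (mul_ne_top ofReal_ne_top (Lp.eLpNorm_ne_top a)) (hle a)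
  refine ⟨(weightedShiftLp c hμ hmem).mkContinuous S hbound,
    fun a n => MemLp.coeFn_toLp_apply hμ (hmem a) n,
    le_antisymm (LinearMap.mkContinuous_norm_le _ hS₀ _) ?_⟩
  obtain ⟨m, rfl⟩ := hS.1
  have he := memLp_single hμ_top (m + 1) (1 : ℂ)
  have he_pos : 0 < ‖he.toLp‖ := by
    rw [Lp.norm_toLp]
    exact ENNReal.toReal_pos (eLpNorm_single_ne_zero hμ (m + 1) one_ne_zero)
      he.eLpNorm_ne_top
  have hTe : ‖weightedShiftLp c hμ hmem he.toLp‖ = s m * ‖he.toLp‖ := by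
    have he_coe : (he.toLp : ℕ → ℂ) = Pi.single (m + 1) 1 :=
      funext (MemLp.coeFn_toLp_apply hμ he)
    rw [weightedShiftLp_apply, Lp.norm_toLp, Lp.norm_toLp, he_coe,
      eLpNorm_weightedShift_single hc, ENNReal.toReal_mul, ENNReal.toReal_ofReal hS₀]
  refine le_of_mul_le_mul_right ?_ he_pos
  rw [← hTe]
  exact ((weightedShiftLp c hμ hmem).mkContinuous _ hbound).le_opNorm he.toLp

end WeightedShift

section UnimodalSequence

variable {β : Type*} [LinearOrder β] {u : ℕ → β}

lemma isGreatest_range_of_monotoneOn_of_antitoneOn {k : ℕ} (hmono : MonotoneOn u (Iic k))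
    (hanti : AntitoneOn u (Ici (k + 1))) : IsGreatest (range u) (max (u k) (u (k + 1))) := by
  refine ⟨?_, ?_⟩
  · rcases max_choice (u k) (u (k + 1)) with h | h <;> rw [h] <;> exact mem_range_self _
  · rintro _ ⟨n, rfl⟩
    rcases le_or_gt n k with h | h
    · exact (hmono h self_mem_Iic h).trans (le_max_left _ _)
    · exact (hanti self_mem_Ici h h).trans (le_max_right _ _)

lemma isGreatest_range_succ {M : β} (h : IsGreatest (range u) M) (h01 : u 0 ≤ u 1) :
    IsGreatest (range fun n => u (n + 1)) M := by
  refine ⟨?_, fun _ ⟨n, hn⟩ => hn ▸ h.2 (mem_range_self _)⟩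
  obtain ⟨j | j, rfl⟩ := h.1
  · exact ⟨0, le_antisymm (h.2 (mem_range_self 1)) h01⟩
  · exact mem_range_self j

end UnimodalSequence

-- The `f` and `x₀` of the statement, with `R = ‖r‖`.
def dilationProfile (α R x : ℝ) : ℝ := x ^ ((3 - α) / 2) * (x + 1) ^ ((α - 1) / 2) * R ^ (x - 1)

def dilationCrit (α R : ℝ) : ℝ :=
  (-(1 + Real.log R) - Real.sqrt ((1 + Real.log R) ^ 2 - 2 * (3 - α) * Real.log R)) /
    (2 * Real.log R)

section DilationProfile

variable {α R : ℝ}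

lemma dilationProfile_nonneg (hR : 0 ≤ R) {x : ℝ} (hx : 0 ≤ x) : 0 ≤ dilationProfile α R x := by
  unfold dilationProfile; positivity

lemma dilationProfile_pos (hR : 0 < R) {x : ℝ} (hx : 0 < x) : 0 < dilationProfile α R x := by
  unfold dilationProfile; positivity

lemma dilationProfile_zero (hα : α < 3) : dilationProfile α R 0 = 0 := by
  simp [dilationProfile, Real.zero_rpow (by linarith : (3 - α) / 2 ≠ 0)]

lemma dilationProfile_add_one (x : ℝ) :
    dilationProfile α R (x + 1) = (x + 1) ^ ((3 - α) / 2) * (x + 2) ^ ((α - 1) / 2) * R ^ x := by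
  simp only [dilationProfile, add_sub_cancel_right, add_assoc, one_add_one_eq_two]

-- At `x = n + 1` this is `|cₙ|² wₙ = f (n + 1)² wₙ₊₁`.
lemma sq_mul_rpow_eq_sq_dilationProfile {x : ℝ} (hx : 0 < x) :
    (x * R ^ (x - 1)) ^ 2 * x ^ (1 - α) = dilationProfile α R x ^ 2 * (x + 1) ^ (1 - α) := by
  have hx1 : 0 < x + 1 := by linarith
  have e1 : (x ^ ((3 - α) / 2)) ^ 2 = x ^ 2 * x ^ (1 - α) := by
    rw [← Real.rpow_natCast, ← Real.rpow_mul hx.le, ← Real.rpow_natCast x 2, ← Real.rpow_add hx]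
    ring_nf
  have e2 : ((x + 1) ^ ((α - 1) / 2)) ^ 2 * (x + 1) ^ (1 - α) = 1 := by
    rw [← Real.rpow_natCast, ← Real.rpow_mul hx1.le, ← Real.rpow_add hx1]
    ring_nf
    exact Real.rpow_zero _
  unfold dilationProfile
  linear_combination (-(((x + 1) ^ ((α - 1) / 2)) ^ 2 * (R ^ (x - 1)) ^ 2 * (x + 1) ^ (1 - α))) * e1
    - x ^ 2 * x ^ (1 - α) * (R ^ (x - 1)) ^ 2 * e2

lemma hasDerivAt_dilationProfile (hR : 0 < R) {x : ℝ} (hx : 0 < x) :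
    HasDerivAt (dilationProfile α R)
      (dilationProfile α R x * ((3 - α) / 2 / x + (α - 1) / 2 / (x + 1) + Real.log R)) x := by
  have hx1 : 0 < x + 1 := by linarith
  have h := (((Real.hasDerivAt_rpow_const (p := (3 - α) / 2) (Or.inl hx.ne')).mul
    (((hasDerivAt_id x).add_const 1).rpow_const (p := (α - 1) / 2) (Or.inl hx1.ne'))).mul
    (((hasDerivAt_id x).sub_const 1).const_rpow hR))
  refine h.congr_deriv ?_
  simp only [dilationProfile, Pi.mul_apply, id, Real.rpow_sub_one hx.ne', Real.rpow_sub_one hx1.ne']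
  field_simp

lemma continuousOn_dilationProfile (hα : α < 3) (hR : 0 < R) :
    ContinuousOn (dilationProfile α R) (Ici 0) := by
  intro x (hx : 0 ≤ x)
  refine ContinuousAt.continuousWithinAt ?_
  exact ((Real.continuousAt_rpow_const x _ (Or.inr (by linarith))).mul
    ((continuous_add_const (1 : ℝ)).continuousAt.rpow_const (Or.inl (by positivity)))).mul
    ((Real.continuousAt_const_rpow hR.ne').comp (continuous_sub_right (1 : ℝ)).continuousAt)

lemma abs_one_add_log_lt_sqrt (hα : α < 3) (hR0 : 0 < R) (hR1 : R < 1) :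
    |1 + Real.log R| < √((1 + Real.log R) ^ 2 - 2 * (3 - α) * Real.log R) := by
  have hL := Real.log_neg hR0 hR1
  rw [Real.lt_sqrt (abs_nonneg _), sq_abs]
  nlinarith

lemma dilationCrit_pos (hα : α < 3) (hR0 : 0 < R) (hR1 : R < 1) : 0 < dilationCrit α R := by
  have hL := Real.log_neg hR0 hR1
  have hs := abs_one_add_log_lt_sqrt hα hR0 hR1
  refine div_pos_of_neg_of_neg ?_ (by linarith)
  linarith [neg_abs_le (1 + Real.log R)]

lemma exists_neg_mul_sub_dilationCrit (hα : α < 3) (hR0 : 0 < R) (hR1 : R < 1) {x : ℝ}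
    (hx : 0 < x) : ∃ k < 0,
      (3 - α) / 2 / x + (α - 1) / 2 / (x + 1) + Real.log R = (x - dilationCrit α R) * k := by
  have hL := Real.log_neg hR0 hR1
  set L := Real.log R
  set s := √((1 + L) ^ 2 - 2 * (3 - α) * L)
  have hs : |1 + L| < s := abs_one_add_log_lt_sqrt hα hR0 hR1
  have hs_sq : s ^ 2 = (1 + L) ^ 2 - 2 * (3 - α) * L := Real.sq_sqrt (by nlinarith)
  have hL0 : L ≠ 0 := hL.ne
  refine ⟨(L * x + (1 + L - s) / 2) / (x * (x + 1)), div_neg_of_neg_of_pos ?_ (by positivity), ?_⟩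
  · linarith [le_abs_self (1 + L), mul_neg_of_neg_of_pos hL hx]
  · rw [show dilationCrit α R = (-(1 + L) - s) / (2 * L) from rfl]
    field_simp
    linear_combination hs_sq

lemma monotoneOn_dilationProfile (hα : α < 3) (hR0 : 0 < R) (hR1 : R < 1) :
    MonotoneOn (dilationProfile α R) (Icc 0 (dilationCrit α R)) := by
  refine monotoneOn_of_hasDerivWithinAt_nonneg (convex_Icc _ _) (f' := fun x =>
    dilationProfile α R x * ((3 - α) / 2 / x + (α - 1) / 2 / (x + 1) + Real.log R))
    ((continuousOn_dilationProfile hα hR0).mono Icc_subset_Ici_self)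
    (fun x hx => ?_) fun x hx => ?_ <;> rw [interior_Icc] at hx
  · exact (hasDerivAt_dilationProfile hR0 hx.1).hasDerivWithinAt
  obtain ⟨k, hk, hlog⟩ := exists_neg_mul_sub_dilationCrit hα hR0 hR1 hx.1
  rw [hlog]
  exact mul_nonneg (dilationProfile_pos hR0 hx.1).le
    (mul_nonneg_of_nonpos_of_nonpos (by linarith [hx.2]) hk.le)

lemma antitoneOn_dilationProfile (hα : α < 3) (hR0 : 0 < R) (hR1 : R < 1) :
    AntitoneOn (dilationProfile α R) (Ici (dilationCrit α R)) := by
  have hcrit := dilationCrit_pos hα hR0 hR1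
  refine antitoneOn_of_hasDerivWithinAt_nonpos (convex_Ici _) (f' := fun x =>
    dilationProfile α R x * ((3 - α) / 2 / x + (α - 1) / 2 / (x + 1) + Real.log R))
    ((continuousOn_dilationProfile hα hR0).mono (Ici_subset_Ici.2 hcrit.le))
    (fun x hx => ?_) fun x hx => ?_ <;> rw [interior_Ici, mem_Ioi] at hx
  · exact (hasDerivAt_dilationProfile hR0 (hcrit.trans hx)).hasDerivWithinAt
  obtain ⟨k, hk, hlog⟩ := exists_neg_mul_sub_dilationCrit hα hR0 hR1 (hcrit.trans hx)
  rw [hlog]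
  exact mul_nonpos_of_nonneg_of_nonpos (dilationProfile_pos hR0 (hcrit.trans hx)).le
    (mul_nonpos_of_nonneg_of_nonpos (by linarith) hk.le)

end DilationProfile

lemma isGreatest_dilationProfile_succ {α R : ℝ} (hα : α < 3) (hR0 : 0 < R) (hR1 : R < 1) :
    IsGreatest (range fun n : ℕ => dilationProfile α R (n + 1))
      (max (dilationProfile α R ⌊dilationCrit α R⌋)
        (dilationProfile α R (⌊dilationCrit α R⌋ + 1))) := by
  have hcrit := (dilationCrit_pos hα hR0 hR1).le
  rw [← natCast_floor_eq_intCast_floor hcrit]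
  set k := ⌊dilationCrit α R⌋₊
  have hk := Nat.lt_floor_add_one (dilationCrit α R)
  have hmax : IsGreatest (range fun n : ℕ => dilationProfile α R n)
      (max (dilationProfile α R k) (dilationProfile α R (k + 1))) := by
    have := isGreatest_range_of_monotoneOn_of_antitoneOn (u := fun n : ℕ => dilationProfile α R n)
      (k := k) (fun m hm n hn hmn => monotoneOn_dilationProfile hα hR0 hR1
        ⟨m.cast_nonneg, (Nat.cast_le.2 hm).trans (Nat.floor_le hcrit)⟩
        ⟨n.cast_nonneg, (Nat.cast_le.2 hn).trans (Nat.floor_le hcrit)⟩ (Nat.cast_le.2 hmn))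
      (fun m hm n hn hmn => antitoneOn_dilationProfile hα hR0 hR1
        (hk.le.trans (by exact_mod_cast (show k + 1 ≤ m from hm)))
        (hk.le.trans (by exact_mod_cast (show k + 1 ≤ n from hn))) (Nat.cast_le.2 hmn))
    simpa using this
  have h01 : dilationProfile α R (0 : ℕ) ≤ dilationProfile α R (1 : ℕ) := by
    simpa [dilationProfile_zero hα] using dilationProfile_nonneg hR0.le zero_le_one
  simpa using isGreatest_range_succ hmax h01

lemma dirMeasure_singleton (α : ℝ) (n : ℕ) :
    dirMeasure α {n} = ENNReal.ofReal (((n : ℝ) + 1) ^ (1 - α)) := by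
  rw [dirMeasure, Measure.sum_apply _ (measurableSet_singleton n), tsum_eq_single n fun m hm => by
    simp [hm]]
  rw [← ENNReal.ofReal_rpow_of_pos (by positivity), ENNReal.ofReal_add (by positivity) zero_le_one,
    ENNReal.ofReal_natCast, ENNReal.ofReal_one]
  simp

lemma enorm_sq_mul_dirMeasure_singleton (α : ℝ) (r : ℂ) (n : ℕ) :
    ‖((n : ℂ) + 1) * r ^ n‖ₑ ^ 2 * dirMeasure α {n} =
      ENNReal.ofReal (dilationProfile α ‖r‖ (n + 1)) ^ 2 * dirMeasure α {n + 1} := by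
  have h := sq_mul_rpow_eq_sq_dilationProfile (α := α) (R := ‖r‖) (x := n + 1) (by positivity)
  rw [add_sub_cancel_right, Real.rpow_natCast] at h
  have hn : ‖(n : ℂ) + 1‖ = n + 1 := by exact_mod_cast Complex.norm_natCast (n + 1)
  rw [dirMeasure_singleton, dirMeasure_singleton, ← ofReal_norm,
    ← ENNReal.ofReal_pow (norm_nonneg _),
    ← ENNReal.ofReal_pow (dilationProfile_nonneg (norm_nonneg r) (by positivity)),
    ← ENNReal.ofReal_mul (by positivity), ← ENNReal.ofReal_mul (by positivity), norm_mul, norm_pow,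
    hn, h]
  push_cast
  ring_nf

/-- The norm of the operator on `H_α` representing `D_φ` for `φ(z) = rz`. -/
theorem Dphi_dilation_norm
    (α : ℝ) (hα : α ∈ Set.Ioo (0 : ℝ) 1) (r : ℂ) (hr0 : r ≠ 0) (hr1 : ‖r‖ < 1) :
    ∃ T : Lp ℂ 2 (dirMeasure α) →L[ℂ] Lp ℂ 2 (dirMeasure α),
      (∀ a : Lp ℂ 2 (dirMeasure α), ∀ n : ℕ,
        (T a : ℕ → ℂ) n = ((n : ℂ) + 1) * r ^ n * (a : ℕ → ℂ) (n + 1)) ∧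
      ‖T‖ =
        (let x₀ : ℝ := (-(1 + Real.log ‖r‖) -
            Real.sqrt ((1 + Real.log ‖r‖) ^ 2 - 2 * (3 - α) * Real.log ‖r‖)) /
            (2 * Real.log ‖r‖)
        let f : ℝ → ℝ := fun x => x ^ ((3 - α) / 2) * (x + 1) ^ ((α - 1) / 2) * ‖r‖ ^ (x - 1)
        if f (⌊x₀⌋ : ℝ) < f ((⌊x₀⌋ : ℝ) + 1) then
          ((⌊x₀⌋ : ℝ) + 1) ^ ((3 - α) / 2) * ((⌊x₀⌋ : ℝ) + 2) ^ ((α - 1) / 2) *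
            ‖r‖ ^ (⌊x₀⌋ : ℝ)
        else
          (⌊x₀⌋ : ℝ) ^ ((3 - α) / 2) * ((⌊x₀⌋ : ℝ) + 1) ^ ((α - 1) / 2) *
            ‖r‖ ^ ((⌊x₀⌋ : ℝ) - 1)) := by
  have hR0 : 0 < ‖r‖ := norm_pos_iff.2 hr0
  have hS := isGreatest_dilationProfile_succ (α := α) (by linarith [hα.2]) hR0 hr1
  obtain ⟨T, hT, hnorm⟩ := exists_weightedShift_norm_eq (enorm_sq_mul_dirMeasure_singleton α r)
    (fun n => by rw [dirMeasure_singleton]; exact (ENNReal.ofReal_pos.2 (by positivity)).ne')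
    (fun n => by rw [dirMeasure_singleton]; exact ENNReal.ofReal_ne_top)
    hS
    ((dilationProfile_nonneg hR0.le (by positivity)).trans (hS.2 (mem_range_self 0)))
  refine ⟨T, hT, hnorm.trans ?_⟩
  exact (max_def_lt _ _).trans (if_congr Iff.rfl (dilationProfile_add_one _) rfl)

end
end

section
/- Let 0 < α < γ < 1 and let φ be a holomorphic self-map of 𝔻 with φ(0) = 0. Then for every w ∈ 𝔻 with w ≠ 0, N_{φ,γ}(w)/(1−|w|²)^{γ+2} ≤ N_{φ,α}(w)/(1−|w|²)^{α+2} (as an inequality in [0,∞]). -/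
open Complex MeasureTheory Metric Set ENNReal

noncomputable section

/-!
By the Schwarz lemma every preimage `z` of `w` satisfies `|w| ≤ |z|`, so
`(1 - |z|²)^γ = (1 - |z|²)^(γ-α) (1 - |z|²)^α ≤ (1 - |w|²)^(γ-α) (1 - |z|²)^α`.
Summing over the preimages gives `N_{φ,γ}(w) ≤ (1 - |w|²)^(γ-α) N_{φ,α}(w)`, which is the claim
after dividing by `(1 - |w|²)^(γ+2)`.
-/

theorem unitDisc_eq_ball : unitDisc = ball (0 : ℂ) 1 := by
  ext z
  simp [unitDisc]

theorem vanishingOrder_eq_zero_of_ne {φ : ℂ → ℂ} {w z : ℂ} (h : φ z ≠ w) :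
    vanishingOrder φ w z = 0 := by
  unfold vanishingOrder
  split_ifs with hφ
  · exact_mod_cast hφ.analyticOrderAt_eq_natCast.mpr
      ⟨fun ζ => φ ζ - w, hφ, sub_ne_zero.mpr h, by simp⟩
  · rfl

theorem norm_apply_le_norm_of_mapsTo_unitDisc {φ : ℂ → ℂ} (hφ_holo : DifferentiableOn ℂ φ unitDisc)
    (hφ_maps : MapsTo φ unitDisc unitDisc) (hφ0 : φ 0 = 0) {z : ℂ} (hz : z ∈ unitDisc) :
    ‖φ z‖ ≤ ‖z‖ := by
  rw [unitDisc_eq_ball] at hφ_holo hφ_maps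
  exact norm_le_norm_of_mapsTo_ball hφ_holo (hφ_maps.mono_right ball_subset_closedBall) hφ0 hz

theorem rpow_le_rpow_sub_mul_rpow {t s α γ : ℝ} (ht : 0 < t) (hts : t ≤ s) (hαγ : α ≤ γ) :
    t ^ γ ≤ s ^ (γ - α) * t ^ α := calc
  t ^ γ = t ^ (γ - α) * t ^ α := by rw [← Real.rpow_add ht, sub_add_cancel]
  _ ≤ s ^ (γ - α) * t ^ α := by gcongr

theorem nevanlinna_le_mul_nevanlinna {α γ : ℝ} (hαγ : α ≤ γ) {φ : ℂ → ℂ}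
    (hφ_holo : DifferentiableOn ℂ φ unitDisc) (hφ_maps : MapsTo φ unitDisc unitDisc)
    (hφ0 : φ 0 = 0) (w : ℂ) :
    nevanlinna γ φ w ≤ ENNReal.ofReal ((1 - ‖w‖ ^ 2) ^ (γ - α)) * nevanlinna α φ w := by
  rw [nevanlinna, nevanlinna, ← ENNReal.tsum_mul_left]
  refine ENNReal.tsum_le_tsum fun z => ?_
  by_cases hzw : φ z = w
  · have hz : ‖(z : ℂ)‖ < 1 := z.2
    have hwz : ‖w‖ ≤ ‖(z : ℂ)‖ := hzw ▸ norm_apply_le_norm_of_mapsTo_unitDisc hφ_holo hφ_maps hφ0 z.2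
    have hpos : 0 < 1 - ‖(z : ℂ)‖ ^ 2 := by nlinarith [norm_nonneg (z : ℂ)]
    have hle : 1 - ‖(z : ℂ)‖ ^ 2 ≤ 1 - ‖w‖ ^ 2 := by nlinarith [norm_nonneg w]
    calc (vanishingOrder φ w z : ℝ≥0∞) * ENNReal.ofReal ((1 - ‖(z : ℂ)‖ ^ 2) ^ γ)
        ≤ (vanishingOrder φ w z : ℝ≥0∞) * (ENNReal.ofReal ((1 - ‖w‖ ^ 2) ^ (γ - α)) *
            ENNReal.ofReal ((1 - ‖(z : ℂ)‖ ^ 2) ^ α)) := by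
          rw [← ENNReal.ofReal_mul (Real.rpow_nonneg (hpos.le.trans hle) _)]
          gcongr
          exact rpow_le_rpow_sub_mul_rpow hpos hle hαγ
      _ = _ := by ring
  · simp [vanishingOrder_eq_zero_of_ne hzw]

theorem ofReal_rpow_sub_div_ofReal_rpow_add {A : ℝ} (hA : 0 < A) (α γ c : ℝ) :
    ENNReal.ofReal (A ^ (γ - α)) / ENNReal.ofReal (A ^ (γ + c)) =
      (ENNReal.ofReal (A ^ (α + c)))⁻¹ := by
  rw [← ENNReal.ofReal_div_of_pos (Real.rpow_pos_of_pos hA _), ← Real.rpow_sub hA,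
    ← ENNReal.ofReal_inv_of_pos (Real.rpow_pos_of_pos hA _), ← Real.rpow_neg hA.le]
  ring_nf

theorem nevanlinna_ratio_mono_general
    (α γ : ℝ) (hαγ : α < γ)
    (φ : ℂ → ℂ) (hφ_holo : DifferentiableOn ℂ φ unitDisc)
    (hφ_maps : Set.MapsTo φ unitDisc unitDisc) (hφ0 : φ 0 = 0)
    (w : ℂ) (hw : w ∈ unitDisc) :
    nevanlinna γ φ w / ENNReal.ofReal ((1 - ‖w‖ ^ 2) ^ (γ + 2)) ≤
      nevanlinna α φ w / ENNReal.ofReal ((1 - ‖w‖ ^ 2) ^ (α + 2)) := by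
  have hA : 0 < 1 - ‖w‖ ^ 2 := by
    have hw1 : ‖w‖ < 1 := hw
    nlinarith [norm_nonneg w]
  calc nevanlinna γ φ w / ENNReal.ofReal ((1 - ‖w‖ ^ 2) ^ (γ + 2))
      ≤ ENNReal.ofReal ((1 - ‖w‖ ^ 2) ^ (γ - α)) * nevanlinna α φ w /
          ENNReal.ofReal ((1 - ‖w‖ ^ 2) ^ (γ + 2)) := by
        gcongr
        exact nevanlinna_le_mul_nevanlinna hαγ.le hφ_holo hφ_maps hφ0 w
    _ = nevanlinna α φ w / ENNReal.ofReal ((1 - ‖w‖ ^ 2) ^ (α + 2)) := by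
        rw [mul_comm, mul_div_assoc, ofReal_rpow_sub_div_ofReal_rpow_add hA, div_eq_mul_inv]

/-- For `0 < α < γ < 1` and `φ(0) = 0`, the ratio
`N_{φ,γ}(w)/(1-|w|²)^{γ+2}` is dominated by `N_{φ,α}(w)/(1-|w|²)^{α+2}`. -/
theorem nevanlinna_ratio_mono
    (α γ : ℝ) (hα : 0 < α) (hαγ : α < γ) (hγ : γ < 1)
    (φ : ℂ → ℂ) (hφ_holo : DifferentiableOn ℂ φ unitDisc)
    (hφ_maps : Set.MapsTo φ unitDisc unitDisc) (hφ0 : φ 0 = 0)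
    (w : ℂ) (hw : w ∈ unitDisc) (hw0 : w ≠ 0) :
    nevanlinna γ φ w / ENNReal.ofReal ((1 - ‖w‖ ^ 2) ^ (γ + 2)) ≤
      nevanlinna α φ w / ENNReal.ofReal ((1 - ‖w‖ ^ 2) ^ (α + 2)) :=
  nevanlinna_ratio_mono_general α γ hαγ φ hφ_holo hφ_maps hφ0 w hw

end
end

section
/- Let δ ∈ (0,1) and define the lens map τ_δ(w) = (σ(w)^δ − 1)/(σ(w)^δ + 1), where σ(w) = (1+w)/(1−w) and σ(w)^δ is taken with the principal branch of the power. Then τ_δ is an injective holomorphic self-map of 𝔻 (i.e., |τ_δ(w)| < 1 for all w ∈ 𝔻 and τ_δ is injective on 𝔻), and there exists a constant c > 0 such that 1 − |τ_δ(w)|² ≥ c (1−|w|²)^δ for all w ∈ 𝔻. -/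
open Complex MeasureTheory Metric Set ENNReal

noncomputable section

/-- The lens map `τ_δ(w) = (σ(w)^δ - 1)/(σ(w)^δ + 1)`, `σ(w) = (1+w)/(1-w)`, with the
principal branch of the complex power. -/
def lensMap (δ : ℝ) (w : ℂ) : ℂ :=
  (((1 + w) / (1 - w)) ^ (δ : ℂ) - 1) / (((1 + w) / (1 - w)) ^ (δ : ℂ) + 1)

/-!
Write `σ(w) = (1 + w)/(1 - w)` and `C(u) = (u - 1)/(u + 1)`, mutually inverse Möbius maps
between `𝔻` and the right half-plane, so that `τ_δ = C ∘ (·)^δ ∘ σ`. For `0 < δ ≤ 1` the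
principal power is injective (`(z^δ)^(1/δ) = z`), and it sends the half-plane into the sector
`|arg| ≤ δπ/2`, whence `Re ζ^δ ≥ cos(δπ/2) |ζ|^δ`. Everything is then measured by the identity
`1 - |C(u)|² = 4 Re u / |u + 1|²`. With `ζ = σ(w)` and `r = |ζ|`, the bound
`|ζ + 1|² ≥ 1 + r²` gives `1 - |w|² ≤ 4r/(1 + r²)`, and `|ζ^δ + 1|² ≤ 4(1 + r²)^δ` gives
`1 - |τ_δ(w)|² ≥ cos(δπ/2) r^δ / (1 + r²)^δ`; so `c = cos(δπ/2)/4` works.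
-/

namespace Real

theorem cos_mul_pi_div_two_nonneg {δ : ℝ} (hδ0 : 0 ≤ δ) (hδ1 : δ ≤ 1) :
    0 ≤ cos (δ * (π / 2)) :=
  cos_nonneg_of_mem_Icc ⟨by nlinarith [pi_pos], by nlinarith [pi_pos]⟩

theorem cos_mul_pi_div_two_pos {δ : ℝ} (hδ0 : 0 ≤ δ) (hδ1 : δ < 1) :
    0 < cos (δ * (π / 2)) :=
  cos_pos_of_mem_Ioo ⟨by nlinarith [pi_pos], by nlinarith [pi_pos]⟩

end Real

namespace Complex

open Real

/-- `δ * arg z` stays in `(-π, π]`, so `Complex.cpow_mul` applies. -/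
theorem cpow_ofReal_leftInverse {δ : ℝ} (hδ0 : 0 < δ) (hδ1 : δ ≤ 1) :
    Function.LeftInverse (fun z : ℂ => z ^ (δ⁻¹ : ℂ)) (fun z : ℂ => z ^ (δ : ℂ)) := by
  intro z
  have him : (log z * δ).im = arg z * δ := by simp [mul_im, log_im]
  have h₁ := neg_pi_lt_arg z
  have h₂ := arg_le_pi z
  have hπ := pi_pos
  show (z ^ (δ : ℂ)) ^ (δ⁻¹ : ℂ) = z
  rw [← cpow_mul _ (by rw [him]; nlinarith) (by rw [him]; nlinarith),
    mul_inv_cancel₀ (ofReal_ne_zero.2 hδ0.ne'), cpow_one]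

theorem cpow_ofReal_injective {δ : ℝ} (hδ0 : 0 < δ) (hδ1 : δ ≤ 1) :
    Function.Injective (fun z : ℂ => z ^ (δ : ℂ)) :=
  (cpow_ofReal_leftInverse hδ0 hδ1).injective

theorem norm_mul_cos_le_re_cpow {ζ : ℂ} (hζ : 0 ≤ ζ.re) {δ : ℝ} (hδ0 : 0 ≤ δ) (hδ1 : δ ≤ 1) :
    ‖ζ‖ ^ δ * Real.cos (δ * (π / 2)) ≤ (ζ ^ (δ : ℂ)).re := by
  rw [cpow_ofReal_re]
  gcongr
  have harg := abs_arg_le_pi_div_two_iff.2 hζ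
  rw [← cos_abs (arg ζ * δ), abs_mul, abs_of_nonneg hδ0]
  apply cos_le_cos_of_nonneg_of_le_pi (by positivity) (by nlinarith [pi_pos])
  nlinarith

theorem re_cpow_pos {ζ : ℂ} (hζ : 0 < ζ.re) {δ : ℝ} (hδ0 : 0 ≤ δ) (hδ1 : δ < 1) :
    0 < (ζ ^ (δ : ℂ)).re := by
  have hζ0 : ζ ≠ 0 := by rintro rfl; simp at hζ
  have hnorm : 0 < ‖ζ‖ ^ δ := by positivity
  exact (mul_pos hnorm (cos_mul_pi_div_two_pos hδ0 hδ1)).trans_le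
    (norm_mul_cos_le_re_cpow hζ.le hδ0 hδ1.le)

theorem norm_cpow_add_one_sq_le (ζ : ℂ) {δ : ℝ} (hδ : 0 ≤ δ) :
    ‖ζ ^ (δ : ℂ) + 1‖ ^ 2 ≤ 4 * (1 + ‖ζ‖ ^ 2) ^ δ := by
  have hsq : (‖ζ‖ ^ δ) ^ 2 ≤ (1 + ‖ζ‖ ^ 2) ^ δ := by
    rw [← rpow_mul_natCast (norm_nonneg ζ), mul_comm, rpow_mul (norm_nonneg ζ),
      Real.rpow_natCast]
    gcongr
    linarith
  have hone : 1 ≤ (1 + ‖ζ‖ ^ 2) ^ δ := one_le_rpow (by nlinarith) hδ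
  calc ‖ζ ^ (δ : ℂ) + 1‖ ^ 2 ≤ (‖ζ‖ ^ δ + 1) ^ 2 := by
        gcongr
        simpa [norm_cpow_real] using norm_add_le (ζ ^ (δ : ℂ)) 1
    _ ≤ 4 * (1 + ‖ζ‖ ^ 2) ^ δ := by nlinarith [sq_nonneg (‖ζ‖ ^ δ - 1)]

theorem one_add_norm_sq_le_norm_add_one_sq {ζ : ℂ} (hζ : 0 ≤ ζ.re) :
    1 + ‖ζ‖ ^ 2 ≤ ‖ζ + 1‖ ^ 2 := by
  simp only [Complex.sq_norm, normSq_apply, add_re, add_im, one_re, one_im, add_zero]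
  nlinarith

theorem ne_neg_one_of_re_nonneg {u : ℂ} (hu : 0 ≤ u.re) : u ≠ -1 := by
  rintro rfl
  norm_num at hu

end Complex

namespace LensMap

open Real

def halfPlaneToDisc (u : ℂ) : ℂ := (u - 1) / (u + 1)

def discToHalfPlane (w : ℂ) : ℂ := (1 + w) / (1 - w)

theorem halfPlaneToDisc_discToHalfPlane {w : ℂ} (hw : w ≠ 1) :
    halfPlaneToDisc (discToHalfPlane w) = w := by
  have : 1 - w ≠ 0 := sub_ne_zero.2 hw.symm
  unfold halfPlaneToDisc discToHalfPlane
  rw [div_sub_one this, div_add_one this, div_div_div_cancel_right₀ this]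
  field_simp
  ring

theorem discToHalfPlane_halfPlaneToDisc {u : ℂ} (hu : u ≠ -1) :
    discToHalfPlane (halfPlaneToDisc u) = u := by
  have : u + 1 ≠ 0 := by rwa [Ne, add_eq_zero_iff_eq_neg]
  unfold halfPlaneToDisc discToHalfPlane
  rw [one_add_div this, one_sub_div this, div_div_div_cancel_right₀ this]
  field_simp
  ring

theorem discToHalfPlane_ne_neg_one {w : ℂ} (hw : w ≠ 1) : discToHalfPlane w ≠ -1 := by
  have : 1 - w ≠ 0 := sub_ne_zero.2 hw.symm
  unfold discToHalfPlane
  rw [Ne, div_eq_iff this]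
  intro h
  have : (2 : ℂ) = 0 := by linear_combination h
  norm_num at this

theorem injOn_discToHalfPlane : InjOn discToHalfPlane {w | w ≠ 1} :=
  LeftInvOn.injOn (f₁' := halfPlaneToDisc) fun _ hw => halfPlaneToDisc_discToHalfPlane hw

theorem injOn_halfPlaneToDisc : InjOn halfPlaneToDisc {u | u ≠ -1} :=
  LeftInvOn.injOn (f₁' := discToHalfPlane) fun _ hu => discToHalfPlane_halfPlaneToDisc hu

theorem one_sub_norm_sq_halfPlaneToDisc {u : ℂ} (hu : u ≠ -1) :
    1 - ‖halfPlaneToDisc u‖ ^ 2 = 4 * u.re / ‖u + 1‖ ^ 2 := by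
  have : ‖u + 1‖ ^ 2 ≠ 0 := by rw [Ne, ← add_eq_zero_iff_eq_neg] at hu; positivity
  rw [halfPlaneToDisc, norm_div, div_pow, eq_div_iff this, sub_mul, one_mul,
    div_mul_cancel₀ _ this]
  simp only [Complex.sq_norm, normSq_apply, add_re, add_im, sub_re, sub_im, one_re, one_im]
  ring

theorem norm_halfPlaneToDisc_lt_one_iff {u : ℂ} (hu : u ≠ -1) :
    ‖halfPlaneToDisc u‖ < 1 ↔ 0 < u.re := by
  have hpos : 0 < ‖u + 1‖ ^ 2 := by rw [Ne, ← add_eq_zero_iff_eq_neg] at hu; positivity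
  rw [← sq_lt_one_iff₀ (norm_nonneg _), ← sub_pos, one_sub_norm_sq_halfPlaneToDisc hu,
    div_pos_iff_of_pos_right hpos]
  constructor <;> intro h <;> linarith

theorem re_discToHalfPlane_pos {w : ℂ} (hw : ‖w‖ < 1) : 0 < (discToHalfPlane w).re := by
  have hw1 : w ≠ 1 := by rintro rfl; simp at hw
  rw [← norm_halfPlaneToDisc_lt_one_iff (discToHalfPlane_ne_neg_one hw1),
    halfPlaneToDisc_discToHalfPlane hw1]
  exact hw

theorem one_sub_norm_sq_halfPlaneToDisc_rpow_le {ζ : ℂ} (hζ : 0 ≤ ζ.re) {δ : ℝ} (hδ0 : 0 ≤ δ)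
    (hδ1 : δ ≤ 1) :
    (1 - ‖halfPlaneToDisc ζ‖ ^ 2) ^ δ ≤ 4 * (‖ζ‖ ^ δ / (1 + ‖ζ‖ ^ 2) ^ δ) := by
  have hle : 4 * ζ.re / ‖ζ + 1‖ ^ 2 ≤ 4 * ‖ζ‖ / (1 + ‖ζ‖ ^ 2) :=
    div_le_div₀ (by positivity) (by linarith [re_le_norm ζ]) (by positivity)
      (one_add_norm_sq_le_norm_add_one_sq hζ)
  have h4 : (4 : ℝ) ^ δ ≤ 4 := by
    simpa using rpow_le_rpow_of_exponent_le (by norm_num : (1 : ℝ) ≤ 4) hδ1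
  calc (1 - ‖halfPlaneToDisc ζ‖ ^ 2) ^ δ = (4 * ζ.re / ‖ζ + 1‖ ^ 2) ^ δ := by
        rw [one_sub_norm_sq_halfPlaneToDisc (ne_neg_one_of_re_nonneg hζ)]
    _ ≤ (4 * ‖ζ‖ / (1 + ‖ζ‖ ^ 2)) ^ δ := by gcongr
    _ = 4 ^ δ * (‖ζ‖ ^ δ / (1 + ‖ζ‖ ^ 2) ^ δ) := by
        rw [div_rpow (by positivity) (by positivity), mul_rpow (by norm_num) (norm_nonneg _),
          mul_div_assoc]
    _ ≤ 4 * (‖ζ‖ ^ δ / (1 + ‖ζ‖ ^ 2) ^ δ) := by gcongr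

theorem cos_mul_le_one_sub_norm_sq_halfPlaneToDisc_cpow {ζ : ℂ} (hζ : 0 ≤ ζ.re) {δ : ℝ}
    (hδ0 : 0 ≤ δ) (hδ1 : δ ≤ 1) :
    Real.cos (δ * (π / 2)) * (‖ζ‖ ^ δ / (1 + ‖ζ‖ ^ 2) ^ δ) ≤
      1 - ‖halfPlaneToDisc (ζ ^ (δ : ℂ))‖ ^ 2 := by
  have hre := norm_mul_cos_le_re_cpow hζ hδ0 hδ1
  have hcos := cos_mul_pi_div_two_nonneg hδ0 hδ1
  have hre0 : 0 ≤ (ζ ^ (δ : ℂ)).re := (mul_nonneg (by positivity) hcos).trans hre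
  have hu := ne_neg_one_of_re_nonneg hre0
  rw [one_sub_norm_sq_halfPlaneToDisc hu]
  rw [Ne, ← add_eq_zero_iff_eq_neg] at hu
  calc Real.cos (δ * (π / 2)) * (‖ζ‖ ^ δ / (1 + ‖ζ‖ ^ 2) ^ δ)
      = 4 * (‖ζ‖ ^ δ * Real.cos (δ * (π / 2))) / (4 * (1 + ‖ζ‖ ^ 2) ^ δ) := by ring
    _ ≤ 4 * (ζ ^ (δ : ℂ)).re / ‖ζ ^ (δ : ℂ) + 1‖ ^ 2 :=
        div_le_div₀ (by positivity) (by linarith) (by positivity)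
          (norm_cpow_add_one_sq_le ζ hδ0)

theorem cos_div_four_mul_rpow_le_one_sub_norm_sq {ζ : ℂ} (hζ : 0 ≤ ζ.re) {δ : ℝ}
    (hδ0 : 0 ≤ δ) (hδ1 : δ ≤ 1) :
    Real.cos (δ * (π / 2)) / 4 * (1 - ‖halfPlaneToDisc ζ‖ ^ 2) ^ δ ≤
      1 - ‖halfPlaneToDisc (ζ ^ (δ : ℂ))‖ ^ 2 :=
  calc Real.cos (δ * (π / 2)) / 4 * (1 - ‖halfPlaneToDisc ζ‖ ^ 2) ^ δ
      ≤ Real.cos (δ * (π / 2)) / 4 * (4 * (‖ζ‖ ^ δ / (1 + ‖ζ‖ ^ 2) ^ δ)) := by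
        gcongr
        · exact div_nonneg (cos_mul_pi_div_two_nonneg hδ0 hδ1) zero_le_four
        · exact one_sub_norm_sq_halfPlaneToDisc_rpow_le hζ hδ0 hδ1
    _ = Real.cos (δ * (π / 2)) * (‖ζ‖ ^ δ / (1 + ‖ζ‖ ^ 2) ^ δ) := by ring
    _ ≤ 1 - ‖halfPlaneToDisc (ζ ^ (δ : ℂ))‖ ^ 2 :=
        cos_mul_le_one_sub_norm_sq_halfPlaneToDisc_cpow hζ hδ0 hδ1

end LensMap

open LensMap in
/-- The lens map `τ_δ` is an injective holomorphic self-map of `𝔻`, and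
`1 - |τ_δ(w)|² ≥ c (1-|w|²)^δ` on `𝔻` for some constant `c > 0`. -/
theorem lensMap_self_map_and_estimate
    (δ : ℝ) (hδ : δ ∈ Set.Ioo (0 : ℝ) 1) :
    (∀ w ∈ unitDisc, lensMap δ w ∈ unitDisc) ∧
    Set.InjOn (lensMap δ) unitDisc ∧
    ∃ c > (0 : ℝ), ∀ w ∈ unitDisc,
      c * (1 - ‖w‖ ^ 2) ^ δ ≤ 1 - ‖lensMap δ w‖ ^ 2 := by
  obtain ⟨hδ0, hδ1⟩ := hδ
  have hτ : lensMap δ = halfPlaneToDisc ∘ (· ^ (δ : ℂ)) ∘ discToHalfPlane := rfl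
  have hne : ∀ w ∈ unitDisc, w ≠ 1 := by rintro w hw rfl; simp [unitDisc] at hw
  have hσ : ∀ w ∈ unitDisc, 0 < (discToHalfPlane w).re := fun w hw => re_discToHalfPlane_pos hw
  have hpow : ∀ w ∈ unitDisc, 0 < (discToHalfPlane w ^ (δ : ℂ)).re := fun w hw =>
    re_cpow_pos (hσ w hw) hδ0.le hδ1
  have hmaps : MapsTo ((· ^ (δ : ℂ)) ∘ discToHalfPlane) unitDisc {u | u ≠ -1} := fun w hw =>
    ne_neg_one_of_re_nonneg (hpow w hw).le
  refine ⟨fun w hw => ?_, ?_, Real.cos (δ * (Real.pi / 2)) / 4, ?_, fun w hw => ?_⟩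
  · rw [hτ]
    exact (norm_halfPlaneToDisc_lt_one_iff (hmaps hw)).2 (hpow w hw)
  · rw [hτ]
    exact injOn_halfPlaneToDisc.comp ((cpow_ofReal_injective hδ0 hδ1.le).injOn.comp
      (injOn_discToHalfPlane.mono hne) (mapsTo_univ _ _)) hmaps
  · exact div_pos (Real.cos_mul_pi_div_two_pos hδ0.le hδ1) four_pos
  · simpa [hτ, halfPlaneToDisc_discToHalfPlane (hne w hw)] using
      cos_div_four_mul_rpow_le_one_sub_norm_sq (hσ w hw).le hδ0.le hδ1.le

end
end
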